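/- arXiv:2204.01088 — 4 statements merged into one kernel-verified Lean document; each statement's English description precedes it below -/
import Mathlib

section
/- Let H be a real Hilbert space, (P_t)_{t>0} a strongly continuous semigroup associated with a closed symmetric non-negative definite bilinear form E with dense domain D(E). Suppose there is a closed subspace H_0 ⊂ H and an integrable function ψ : (0,∞) → (0,1] with ψ(t) → 0 as t → ∞ such that ‖P_t u‖ ≤ ψ(t)‖u‖ for all u ∈ H_0 and t > 0. Then for all u ∈ H_0, the Bochner integral G(u) = ∫_0^∞ P_t(u) dt belongs to D(E), E(G(u), v) = ⟨u, v⟩ for all v ∈ D(E), and E(G(u), G(u)) ≤ (∫_0^∞ ψ(t) dt) ‖u‖². -/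
/-!
Write `G = ∫₀^∞ P_t u dt`. The semigroup law gives `P_a G = ∫_a^∞ P_t u dt`, so differentiating
`s ↦ ⟪P_s G, v⟫` at `a > 0` and comparing with the generator identity yields
`E(P_a G, v) = ⟪P_a u, v⟫` for `v ∈ D`. Consequently
`E(P_a G - P_b G) = ⟪P_a u - P_b u, P_a G - P_b G⟫ → 0` as `a, b → 0`, and closedness of `E`
puts `G` in `D` with `E(G, v) = ⟪u, v⟫`; Cauchy–Schwarz for `E` lets the identity pass to the
limit. Finally `E(G, G) = ⟪u, G⟫ ≤ ‖u‖ ‖G‖ ≤ (∫ ψ) ‖u‖²`.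
-/

open MeasureTheory Real Set Filter Topology
open scoped RealInnerProductSpace

section Form

variable {M : Type*} [AddCommGroup M] [Module ℝ M] {E : M →ₗ[ℝ] M →ₗ[ℝ] ℝ}

theorem abs_apply_le_sqrt_of_symm (hsymm : ∀ x y, E x y = E y x) (hnonneg : ∀ x, 0 ≤ E x x)
    (x y : M) : |E x y| ≤ √(E x x * E y y) :=
  abs_le_sqrt <| LinearMap.BilinForm.apply_sq_le_of_symm E hnonneg
    (LinearMap.isSymm_def.2 hsymm) x y

theorem tendsto_apply_of_tendsto_apply_sub_self (hsymm : ∀ x y, E x y = E y x)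
    (hnonneg : ∀ x, 0 ≤ E x x) {ι : Type*} {l : Filter ι} {x : ι → M} {w : M}
    (hx : Tendsto (fun n => E (x n - w) (x n - w)) l (𝓝 0)) (v : M) :
    Tendsto (fun n => E (x n) v) l (𝓝 (E w v)) := by
  rw [tendsto_iff_norm_sub_tendsto_zero]
  refine squeeze_zero_norm (fun n => ?_)
    (by simpa only [zero_mul, sqrt_zero] using (hx.mul_const (E v v)).sqrt)
  rw [norm_norm, Real.norm_eq_abs, ← LinearMap.sub_apply, ← map_sub]
  exact abs_apply_le_sqrt_of_symm hsymm hnonneg _ _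

end Form

section ClosedForm

variable {H : Type*} [NormedAddCommGroup H] [InnerProductSpace ℝ H]
  {D : Submodule ℝ H} {E : H →ₗ[ℝ] H →ₗ[ℝ] ℝ}

theorem mem_and_apply_eq_inner_of_tendsto (hsymm : ∀ x y, E x y = E y x)
    (hnonneg : ∀ x, 0 ≤ E x x)
    (hclosed : ∀ (u : ℕ → H) (w : H), (∀ n, u n ∈ D) →
      Tendsto u atTop (𝓝 w) →
      (∀ ε > (0 : ℝ), ∃ N, ∀ m ≥ N, ∀ n ≥ N, E (u n - u m) (u n - u m) < ε) →
      w ∈ D ∧ Tendsto (fun n => E (u n - w) (u n - w)) atTop (𝓝 0))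
    {x y : ℕ → H} {w z : H} (hxD : ∀ n, x n ∈ D) (hx : Tendsto x atTop (𝓝 w))
    (hy : Tendsto y atTop (𝓝 z)) (hxy : ∀ n, ∀ v ∈ D, E (x n) v = ⟪y n, v⟫) :
    w ∈ D ∧ ∀ v ∈ D, E w v = ⟪z, v⟫ := by
  have hdiff : ∀ m n, E (x n - x m) (x n - x m) = ⟪y n - y m, x n - x m⟫ := fun m n => by
    rw [LinearMap.map_sub₂, hxy n _ (D.sub_mem (hxD n) (hxD m)),
      hxy m _ (D.sub_mem (hxD n) (hxD m)), inner_sub_left]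
  have hcauchy :
      Tendsto (fun p : ℕ × ℕ => E (x p.2 - x p.1) (x p.2 - x p.1)) atTop (𝓝 0) := by
    rw [← prod_atTop_atTop_eq]
    have h := ((hy.comp tendsto_snd).sub (hy.comp tendsto_fst)).inner (𝕜 := ℝ)
      ((hx.comp tendsto_snd).sub (hx.comp tendsto_fst))
    simp only [sub_self, inner_zero_left] at h
    simpa only [hdiff, Function.comp_apply] using h
  obtain ⟨hwD, hEw⟩ := hclosed x w hxD hx fun ε hε =>
    eventually_atTop_prod_self' (p := fun p => E (x p.2 - x p.1) (x p.2 - x p.1) < ε) |>.1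
      (hcauchy.eventually (gt_mem_nhds hε))
  refine ⟨hwD, fun v hv => tendsto_nhds_unique
    (tendsto_apply_of_tendsto_apply_sub_self hsymm hnonneg hEw v) ?_⟩
  simpa only [hxy _ v hv] using hy.inner tendsto_const_nhds

end ClosedForm

section Integral

variable {F : Type*} [NormedAddCommGroup F] [NormedSpace ℝ F]

theorem setIntegral_Ioi_comp_add_right (g : ℝ → F) (a b : ℝ) :
    ∫ t in Ioi b, g (t + a) = ∫ t in Ioi (b + a), g t := by
  simpa [preimage_add_const_Ioi] using
    (measurePreserving_add_right volume a).setIntegral_preimage_emb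
      (measurableEmbedding_addRight a) g (Ioi (b + a))

theorem hasDerivAt_setIntegral_Ioi [CompleteSpace F] {f : ℝ → F} {a b : ℝ}
    (hf : IntegrableOn f (Ioi b)) (hba : b < a) (hfa : ContinuousAt f a) :
    HasDerivAt (fun s => ∫ t in Ioi s, f t) (-f a) a := by
  have hprim : HasDerivAt (fun s => ∫ t in b..s, f t) (f a) a :=
    intervalIntegral.integral_hasDerivAt_right
      ((intervalIntegrable_iff_integrableOn_Ioc_of_le hba.le).2 (hf.mono_set Ioc_subset_Ioi_self))
      ⟨Ioi b, Ioi_mem_nhds hba, hf.aestronglyMeasurable⟩ hfa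
  refine (hprim.const_sub (∫ t in Ioi b, f t)).congr_of_eventuallyEq ?_
  filter_upwards [Ioi_mem_nhds hba] with s hs
  rw [← intervalIntegral.integral_Ioi_sub_Ioi hf (le_of_lt hs), sub_sub_cancel]

end Integral

section Semigroup

variable {H : Type*} [NormedAddCommGroup H] [InnerProductSpace ℝ H] [CompleteSpace H]
  {P : ℝ → H →L[ℝ] H} {u : H}

theorem semigroup_apply_setIntegral_Ioi
    (hsg : ∀ s > (0 : ℝ), ∀ t > (0 : ℝ), P (s + t) = (P s).comp (P t))
    (hint : IntegrableOn (fun t => P t u) (Ioi 0)) {a : ℝ} (ha : 0 < a) :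
    P a (∫ t in Ioi 0, P t u) = ∫ t in Ioi a, P t u := by
  have hshift := setIntegral_Ioi_comp_add_right (fun t => P t u) a 0
  rw [zero_add] at hshift
  rw [← (P a).integral_comp_comm hint, ← hshift]
  refine setIntegral_congr_fun measurableSet_Ioi fun t ht => ?_
  rw [add_comm, hsg a ha t ht, ContinuousLinearMap.comp_apply]

theorem inner_semigroup_apply_setIntegral_Ioi
    (hsg : ∀ s > (0 : ℝ), ∀ t > (0 : ℝ), P (s + t) = (P s).comp (P t))
    (hint : IntegrableOn (fun t => P t u) (Ioi 0)) {a : ℝ} (ha : 0 < a) (v : H) :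
    ⟪P a (∫ t in Ioi 0, P t u), v⟫ = ∫ t in Ioi a, ⟪P t u, v⟫ := by
  rw [semigroup_apply_setIntegral_Ioi hsg hint ha, real_inner_comm,
    ← integral_inner (hint.mono_set (Ioi_subset_Ioi ha.le))]
  simp_rw [real_inner_comm v]

theorem form_semigroup_apply_setIntegral_Ioi {D : Submodule ℝ H} {E : H →ₗ[ℝ] H →ₗ[ℝ] ℝ}
    (hsg : ∀ s > (0 : ℝ), ∀ t > (0 : ℝ), P (s + t) = (P s).comp (P t))
    (hcont : ContinuousOn (fun t => P t u) (Ioi 0))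
    (hgen : ∀ (w : H), ∀ v ∈ D, ∀ t > (0 : ℝ),
      HasDerivAt (fun s : ℝ => ⟪P s w, v⟫) (-(E (P t w) v)) t)
    (hint : IntegrableOn (fun t => P t u) (Ioi 0)) {a : ℝ} (ha : 0 < a) {v : H} (hv : v ∈ D) :
    E (P a (∫ t in Ioi 0, P t u)) v = ⟪P a u, v⟫ := by
  have hderiv : HasDerivAt (fun s => ⟪P s (∫ t in Ioi 0, P t u), v⟫) (-⟪P a u, v⟫) a := by
    refine (hasDerivAt_setIntegral_Ioi (hint.inner_const (𝕜 := ℝ) v) ha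
      ((hcont.continuousAt (Ioi_mem_nhds ha)).inner continuousAt_const)).congr_of_eventuallyEq ?_
    filter_upwards [Ioi_mem_nhds ha] with s hs
    exact inner_semigroup_apply_setIntegral_Ioi hsg hint hs v
  exact neg_injective ((hgen _ v hv a ha).unique hderiv)

end Semigroup

theorem covariance_representation_closed_form_general
    {H : Type*} [NormedAddCommGroup H] [InnerProductSpace ℝ H] [CompleteSpace H]
    (D : Submodule ℝ H)
    (E : H →ₗ[ℝ] H →ₗ[ℝ] ℝ)
    (hsymm : ∀ u v : H, E u v = E v u)
    (hnonneg : ∀ u : H, 0 ≤ E u u)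
    (hclosed : ∀ (u : ℕ → H) (w : H), (∀ n, u n ∈ D) →
      Tendsto u atTop (nhds w) →
      (∀ ε > (0 : ℝ), ∃ N, ∀ m ≥ N, ∀ n ≥ N, E (u n - u m) (u n - u m) < ε) →
      w ∈ D ∧ Tendsto (fun n => E (u n - w) (u n - w)) atTop (nhds 0))
    (P : ℝ → H →L[ℝ] H)
    (hsg : ∀ s > (0 : ℝ), ∀ t > (0 : ℝ), P (s + t) = (P s).comp (P t))
    (hstrong : ∀ u : H, Tendsto (fun t => P t u) (nhdsWithin 0 (Ioi 0)) (nhds u))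
    (hcont : ∀ u : H, ContinuousOn (fun t => P t u) (Ioi 0))
    (hdom : ∀ (u : H), ∀ t > (0 : ℝ), P t u ∈ D)
    (hgen : ∀ (u : H), ∀ v ∈ D, ∀ t > (0 : ℝ),
      HasDerivAt (fun s : ℝ => (inner ℝ (P s u) v : ℝ)) (-(E (P t u) v)) t)
    (H₀ : Submodule ℝ H)
    (ψ : ℝ → ℝ)
    (hψint : IntegrableOn ψ (Ioi 0) volume)
    (hP : ∀ u ∈ H₀, ∀ t > (0 : ℝ), ‖P t u‖ ≤ ψ t * ‖u‖) :
    ∀ u ∈ H₀,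
      IntegrableOn (fun t => P t u) (Ioi 0) volume ∧
      (∫ t in Ioi (0 : ℝ), P t u) ∈ D ∧
      (∀ v ∈ D, E (∫ t in Ioi (0 : ℝ), P t u) v = (inner ℝ u v : ℝ)) ∧
      E (∫ t in Ioi (0 : ℝ), P t u) (∫ t in Ioi (0 : ℝ), P t u) ≤
        (∫ t in Ioi (0 : ℝ), ψ t) * ‖u‖ ^ 2 := by
  intro u hu
  have hbound : ∀ᵐ t ∂volume.restrict (Ioi 0), ‖P t u‖ ≤ ψ t * ‖u‖ :=
    (ae_restrict_iff' measurableSet_Ioi).2 (ae_of_all _ fun t ht => hP u hu t ht)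
  have hint : IntegrableOn (fun t => P t u) (Ioi 0) volume :=
    (hψint.mul_const ‖u‖).mono' ((hcont u).aestronglyMeasurable measurableSet_Ioi) hbound
  set G := ∫ t in Ioi (0 : ℝ), P t u
  have hnorm : ‖G‖ ≤ (∫ t in Ioi (0 : ℝ), ψ t) * ‖u‖ := by
    rw [← integral_mul_const]
    exact norm_integral_le_of_norm_le (hψint.mul_const _) hbound
  set a : ℕ → ℝ := fun n => ((n + 1 : ℕ) : ℝ)⁻¹
  have ha : ∀ n, 0 < a n := fun n => by positivity
  have hat : Tendsto a atTop (𝓝[>] 0) := tendsto_inv_atTop_nhdsGT_zero.comp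
    (tendsto_natCast_atTop_atTop.comp (tendsto_add_atTop_nat 1))
  obtain ⟨hGD, hEG⟩ := mem_and_apply_eq_inner_of_tendsto hsymm hnonneg hclosed
    (fun n => hdom G (a n) (ha n)) ((hstrong G).comp hat) ((hstrong u).comp hat)
    fun n v hv => form_semigroup_apply_setIntegral_Ioi hsg (hcont u) hgen hint (ha n) hv
  refine ⟨hint, hGD, hEG, ?_⟩
  calc E G G = ⟪u, G⟫ := hEG G hGD
    _ ≤ ‖u‖ * ‖G‖ := real_inner_le_norm u G
    _ ≤ ‖u‖ * ((∫ t in Ioi (0 : ℝ), ψ t) * ‖u‖) := by gcongr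
    _ = (∫ t in Ioi (0 : ℝ), ψ t) * ‖u‖ ^ 2 := by ring

/-- Covariance representation via closed symmetric forms: assume `E` is a closed symmetric
non-negative definite bilinear form with dense domain `D`, `(P_t)_{t>0}` is the associated
strongly continuous contraction semigroup, `H₀` is a closed subspace and `ψ : (0,∞) → (0,1]`
is integrable with `ψ(t) → 0` and `‖P_t u‖ ≤ ψ(t)‖u‖` on `H₀`. Then for `u ∈ H₀` the Bochner
integral `G(u) = ∫_0^∞ P_t u dt` exists, lies in `D`, satisfies `E(G(u), v) = ⟨u, v⟩` for all
`v ∈ D`, and `E(G(u), G(u)) ≤ (∫_0^∞ ψ) ‖u‖²`. -/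
theorem covariance_representation_closed_form
    {H : Type*} [NormedAddCommGroup H] [InnerProductSpace ℝ H] [CompleteSpace H]
    (D : Submodule ℝ H) (hDdense : Dense (D : Set H))
    (E : H →ₗ[ℝ] H →ₗ[ℝ] ℝ)
    (hsymm : ∀ u v : H, E u v = E v u)
    (hnonneg : ∀ u : H, 0 ≤ E u u)
    (hclosed : ∀ (u : ℕ → H) (w : H), (∀ n, u n ∈ D) →
      Tendsto u atTop (nhds w) →
      (∀ ε > (0 : ℝ), ∃ N, ∀ m ≥ N, ∀ n ≥ N, E (u n - u m) (u n - u m) < ε) →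
      w ∈ D ∧ Tendsto (fun n => E (u n - w) (u n - w)) atTop (nhds 0))
    (P : ℝ → H →L[ℝ] H)
    (hsg : ∀ s > (0 : ℝ), ∀ t > (0 : ℝ), P (s + t) = (P s).comp (P t))
    (hcontr : ∀ t > (0 : ℝ), ‖P t‖ ≤ 1)
    (hstrong : ∀ u : H, Tendsto (fun t => P t u) (nhdsWithin 0 (Ioi 0)) (nhds u))
    (hcont : ∀ u : H, ContinuousOn (fun t => P t u) (Ioi 0))
    (hdom : ∀ (u : H), ∀ t > (0 : ℝ), P t u ∈ D)
    (hgen : ∀ (u : H), ∀ v ∈ D, ∀ t > (0 : ℝ),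
      HasDerivAt (fun s : ℝ => (inner ℝ (P s u) v : ℝ)) (-(E (P t u) v)) t)
    (H₀ : Submodule ℝ H) (hH₀ : IsClosed (H₀ : Set H))
    (ψ : ℝ → ℝ) (hψ : ∀ t > (0 : ℝ), ψ t ∈ Ioc (0 : ℝ) 1)
    (hψ0 : Tendsto ψ atTop (nhds 0))
    (hψint : IntegrableOn ψ (Ioi 0) volume)
    (hP : ∀ u ∈ H₀, ∀ t > (0 : ℝ), ‖P t u‖ ≤ ψ t * ‖u‖) :
    ∀ u ∈ H₀,
      IntegrableOn (fun t => P t u) (Ioi 0) volume ∧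
      (∫ t in Ioi (0 : ℝ), P t u) ∈ D ∧
      (∀ v ∈ D, E (∫ t in Ioi (0 : ℝ), P t u) v = (inner ℝ u v : ℝ)) ∧
      E (∫ t in Ioi (0 : ℝ), P t u) (∫ t in Ioi (0 : ℝ), P t u) ≤
        (∫ t in Ioi (0 : ℝ), ψ t) * ‖u‖ ^ 2 :=
  covariance_representation_closed_form_general D E hsymm hnonneg hclosed P hsg hstrong hcont hdom
    hgen H₀ ψ hψint hP
end

section
/- Let δ ∈ (0,1) and μ_δ(dx) = C_δ exp(-|x|^δ) dx be the corresponding probability measure on ℝ with density p_δ. For p ∈ [2,∞) and g ∈ L^p(μ_δ) with ∫ g dμ_δ = 0, define f_δ(x) = (1/p_δ(x)) ∫_x^∞ g(y) p_δ(y) dy. Then for every r ∈ [1,∞) with r/(r-1) > p/(p-1), one has ‖f_δ‖_{L^r(μ_δ)} ≤ C(p,δ,r) ‖g‖_{L^p(μ_δ)} for some constant C(p,δ,r) depending only on p, δ, r. -/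
open MeasureTheory Real Set
open scoped ENNReal

/-- The density `p_δ(x) = C exp(-|x|^δ)`. -/
noncomputable def pdel (C δ x : ℝ) : ℝ := C * Real.exp (-(|x| ^ δ))

/-- The probability measure `μ_δ(dx) = C exp(-|x|^δ) dx` on `ℝ`. -/
noncomputable def mudel (C δ : ℝ) : Measure ℝ :=
  volume.withDensity fun x => ENNReal.ofReal (pdel C δ x)

/-- `f_δ(x) = p_δ(x)⁻¹ ∫_x^∞ g(y) p_δ(y) dy`. -/
noncomputable def fdel (C δ : ℝ) (g : ℝ → ℝ) (x : ℝ) : ℝ :=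
  (pdel C δ x)⁻¹ * ∫ y in Ioi x, g y * pdel C δ y

/-!
Since `∫ g dμ_δ = 0`, the integral `p_δ(x) f_δ(x) = ∫_{y > x} g dμ_δ` equals `-∫_{y ≤ x} g dμ_δ`,
so it may be taken over whichever tail avoids the origin, a subset of `{y | |x| ≤ |y|}`.
Hölder's inequality bounds it by `‖g‖_p μ_δ{|y| ≥ |x|}^θ` with `θ = 1 - 1/p`, and Chernoff's bound
with the finite exponential moment `∫ exp(a|y|^δ) dμ_δ` (any `a < 1`) gives
`μ_δ{|y| ≥ |x|} ≲ exp(-a|x|^δ)`. Hence `|f_δ(x)| ≲ ‖g‖_p exp((1 - aθ)|x|^δ)`, which lies in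
`L^r(μ_δ)` once `r(1 - aθ) < 1`; such an `a < 1` exists exactly when `r < p`.
-/

lemma lt_of_div_sub_one_lt_div_sub_one {p r : ℝ} (hp : 1 < p) (hr : 1 ≤ r)
    (h : p / (p - 1) < r / (r - 1)) : r < p := by
  rcases hr.eq_or_lt with rfl | hr
  · -- at `r = 1` the right-hand side is the junk value `1 / 0 = 0`
    rw [sub_self, div_zero] at h
    exact absurd h (div_pos (by linarith) (by linarith)).not_gt
  · rw [div_lt_div_iff₀ (by linarith) (by linarith)] at h
    nlinarith

-- `a` will be the order of the exponential moment in the Chernoff bound.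
lemma exists_moment_exponent {p r : ℝ} (hp : 1 < p) (hr : 1 ≤ r) (hrp : r < p) :
    ∃ a : ℝ, 0 ≤ a ∧ a < 1 ∧ r * (1 - a * (1 - 1 / p)) < 1 := by
  refine ⟨(2 * p * r - p - r) / (2 * r * (p - 1)), div_nonneg (by nlinarith) (by nlinarith),
    (div_lt_one (by nlinarith)).2 (by nlinarith), ?_⟩
  have hp0 : p - 1 ≠ 0 := by linarith
  field_simp
  nlinarith

lemma integrable_exp_neg_mul_abs_rpow {b δ : ℝ} (hb : 0 < b) (hδ : 0 < δ) :
    Integrable fun x : ℝ => exp (-(b * |x| ^ δ)) := by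
  have hIoi : IntegrableOn (fun x : ℝ => exp (-(b * |x| ^ δ))) (Ioi 0) := by
    refine (integrableOn_rpow_mul_exp_neg_mul_rpow (s := 0) (by norm_num) hδ hb).congr_fun
      (fun x hx => ?_) measurableSet_Ioi
    simp [abs_of_pos (mem_Ioi.mp hx)]
  have hIio : IntegrableOn (fun x : ℝ => exp (-(b * |x| ^ δ))) (Iio 0) := by
    simpa only [abs_neg] using IntegrableOn.comp_neg_Iio (μ := volume) (c := (0 : ℝ))
      (f := fun x : ℝ => exp (-(b * |x| ^ δ))) (by rwa [neg_zero])
  rw [← integrableOn_univ, ← Iio_union_Ici]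
  exact hIio.union (Iff.mpr integrableOn_Ici_iff_integrableOn_Ioi hIoi)

lemma measure_abs_ge_le_mul_lintegral_exp (μ : Measure ℝ) {a δ : ℝ} (ha : 0 ≤ a) (hδ : 0 ≤ δ)
    (x : ℝ) :
    μ {y | |x| ≤ |y|} ≤
      ENNReal.ofReal (exp (-(a * |x| ^ δ))) * ∫⁻ y, ENNReal.ofReal (exp (a * |y| ^ δ)) ∂μ := by
  have hsub : {y | |x| ≤ |y|} ⊆
      {y | ENNReal.ofReal (exp (a * |x| ^ δ)) ≤ ENNReal.ofReal (exp (a * |y| ^ δ))} :=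
    fun y hy => ENNReal.ofReal_le_ofReal (exp_le_exp.2 (mul_le_mul_of_nonneg_left
      (rpow_le_rpow (abs_nonneg x) hy hδ) ha))
  calc μ {y | |x| ≤ |y|} ≤ (∫⁻ y, ENNReal.ofReal (exp (a * |y| ^ δ)) ∂μ) /
        ENNReal.ofReal (exp (a * |x| ^ δ)) :=
      (measure_mono hsub).trans (meas_ge_le_lintegral_div (by fun_prop) (by simp [exp_pos])
        ENNReal.ofReal_ne_top)
    _ = _ := by
      rw [ENNReal.div_eq_inv_mul, ← ENNReal.ofReal_inv_of_pos (exp_pos _), ← exp_neg]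

lemma one_sub_one_div_toReal_nonneg {p : ℝ≥0∞} (hp : 1 ≤ p) : 0 ≤ 1 - 1 / p.toReal := by
  rcases eq_or_ne p ∞ with rfl | hp_top
  · simp
  · have : 1 ≤ p.toReal := ENNReal.toReal_one ▸ ENNReal.toReal_mono hp_top hp
    exact sub_nonneg.2 ((div_le_one (by linarith)).2 this)

lemma enorm_setIntegral_le_eLpNorm_mul_measure_rpow {α E : Type*} [MeasurableSpace α]
    [NormedAddCommGroup E] [NormedSpace ℝ E] {μ : Measure α} {g : α → E} {p : ℝ≥0∞}
    (hp : 1 ≤ p) (hg : AEStronglyMeasurable g μ) (s : Set α) :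
    ‖∫ x in s, g x ∂μ‖ₑ ≤ eLpNorm g p μ * μ s ^ (1 - 1 / p.toReal) := by
  calc ‖∫ x in s, g x ∂μ‖ₑ ≤ eLpNorm g 1 (μ.restrict s) := by
        rw [eLpNorm_one_eq_lintegral_enorm]; exact enorm_integral_le_lintegral_enorm _
    _ ≤ eLpNorm g p (μ.restrict s) * μ s ^ (1 - 1 / p.toReal) := by
        simpa using eLpNorm_le_eLpNorm_mul_rpow_measure_univ hp hg.restrict
    _ ≤ eLpNorm g p μ * μ s ^ (1 - 1 / p.toReal) := by
        gcongr; exact Measure.restrict_le_self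

section mudel

variable {C δ : ℝ}

lemma pdel_nonneg (hC : 0 ≤ C) (x : ℝ) : 0 ≤ pdel C δ x :=
  mul_nonneg hC (exp_pos _).le

@[fun_prop]
lemma measurable_pdel : Measurable (pdel C δ) := by
  unfold pdel; fun_prop

lemma lintegral_exp_mul_abs_rpow_mudel_lt_top (hδ : 0 < δ) {a : ℝ} (ha : a < 1) :
    ∫⁻ x, ENNReal.ofReal (exp (a * |x| ^ δ)) ∂mudel C δ < ∞ := by
  rw [mudel, lintegral_withDensity_eq_lintegral_mul₀ (by fun_prop) (by fun_prop)]
  have h : ∀ x, ENNReal.ofReal (pdel C δ x) * ENNReal.ofReal (exp (a * |x| ^ δ)) =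
      ENNReal.ofReal (C * exp (-((1 - a) * |x| ^ δ))) := fun x => by
    rw [← ENNReal.ofReal_mul' (exp_pos _).le, pdel, mul_assoc, ← exp_add]
    ring_nf
  simp only [Pi.mul_apply, h]
  exact ((integrable_exp_neg_mul_abs_rpow (by linarith) hδ).const_mul C).lintegral_lt_top

lemma isFiniteMeasure_mudel (hδ : 0 < δ) : IsFiniteMeasure (mudel C δ) where
  measure_univ_lt_top := by
    simpa using lintegral_exp_mul_abs_rpow_mudel_lt_top (C := C) hδ zero_lt_one

lemma setIntegral_mudel (hC : 0 ≤ C) (g : ℝ → ℝ) {s : Set ℝ} (hs : MeasurableSet s) :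
    ∫ y in s, g y ∂mudel C δ = ∫ y in s, g y * pdel C δ y := by
  rw [mudel, setIntegral_withDensity_eq_setIntegral_toReal_smul (by fun_prop)
    (ae_of_all _ fun _ => ENNReal.ofReal_lt_top) _ hs]
  refine setIntegral_congr_fun hs fun y _ => ?_
  rw [ENNReal.toReal_ofReal (pdel_nonneg hC y), smul_eq_mul, mul_comm]

lemma enorm_fdel_le (hC : 0 ≤ C) (hδ : 0 < δ) {g : ℝ → ℝ} {p : ℝ≥0∞} (hp : 1 ≤ p)
    (hg : MemLp g p (mudel C δ)) (hg0 : ∫ y, g y ∂mudel C δ = 0) (x : ℝ) :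
    ‖fdel C δ g x‖ₑ ≤ ‖(pdel C δ x)⁻¹‖ₑ *
      (eLpNorm g p (mudel C δ) * mudel C δ {y | |x| ≤ |y|} ^ (1 - 1 / p.toReal)) := by
  have := isFiniteMeasure_mudel (C := C) hδ
  have hθ := one_sub_one_div_toReal_nonneg hp
  have hI : ‖∫ y in Ioi x, g y ∂mudel C δ‖ₑ ≤
      eLpNorm g p (mudel C δ) * mudel C δ {y | |x| ≤ |y|} ^ (1 - 1 / p.toReal) := by
    rcases le_or_gt 0 x with hx | hx
    · refine (enorm_setIntegral_le_eLpNorm_mul_measure_rpow hp hg.1 _).trans ?_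
      gcongr
      exact fun y hy => (abs_of_nonneg hx).trans_le (le_of_lt hy |>.trans (le_abs_self y))
    · -- the mean-zero condition trades the tail `Ioi x`, which contains `0`, for `Iic x`
      rw [← compl_Iic, setIntegral_compl measurableSet_Iic (hg.integrable hp), hg0, zero_sub,
        enorm_neg]
      refine (enorm_setIntegral_le_eLpNorm_mul_measure_rpow hp hg.1 _).trans ?_
      gcongr
      exact fun y hy => (abs_of_neg hx).trans_le ((neg_le_neg hy).trans (neg_le_abs y))
  rw [fdel, ← setIntegral_mudel hC _ measurableSet_Ioi, enorm_mul]
  gcongr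

lemma enorm_fdel_le_mul_exp (hC : 0 ≤ C) (hδ : 0 < δ) {g : ℝ → ℝ} {p : ℝ≥0∞} (hp : 1 ≤ p)
    (hg : MemLp g p (mudel C δ)) (hg0 : ∫ y, g y ∂mudel C δ = 0) {a : ℝ} (ha : 0 ≤ a) (x : ℝ) :
    ‖fdel C δ g x‖ₑ ≤ eLpNorm g p (mudel C δ) *
      (∫⁻ y, ENNReal.ofReal (exp (a * |y| ^ δ)) ∂mudel C δ) ^ (1 - 1 / p.toReal) *
      ‖(pdel C δ x)⁻¹ * exp (-(a * (1 - 1 / p.toReal) * |x| ^ δ))‖ₑ := by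
  set θ := 1 - 1 / p.toReal
  set M := ∫⁻ y, ENNReal.ofReal (exp (a * |y| ^ δ)) ∂mudel C δ
  have hθ : 0 ≤ θ := one_sub_one_div_toReal_nonneg hp
  calc ‖fdel C δ g x‖ₑ
      ≤ ‖(pdel C δ x)⁻¹‖ₑ * (eLpNorm g p (mudel C δ) * mudel C δ {y | |x| ≤ |y|} ^ θ) :=
        enorm_fdel_le hC hδ hp hg hg0 x
    _ ≤ ‖(pdel C δ x)⁻¹‖ₑ *
          (eLpNorm g p (mudel C δ) * (ENNReal.ofReal (exp (-(a * |x| ^ δ))) * M) ^ θ) := by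
        gcongr
        exact measure_abs_ge_le_mul_lintegral_exp _ ha hδ.le x
    _ = eLpNorm g p (mudel C δ) * M ^ θ * ‖(pdel C δ x)⁻¹ * exp (-(a * θ * |x| ^ δ))‖ₑ := by
        rw [ENNReal.mul_rpow_of_nonneg _ _ hθ, ENNReal.ofReal_rpow_of_pos (exp_pos _), ← exp_mul,
          enorm_mul, Real.enorm_of_nonneg (exp_pos _).le]
        ring_nf

lemma memLp_exp_mul_abs_rpow_mudel (hδ : 0 < δ) {c r : ℝ} (hr : 0 < r) (hcr : r * c < 1) :
    MemLp (fun x => exp (c * |x| ^ δ)) (ENNReal.ofReal r) (mudel C δ) := by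
  refine ⟨(by fun_prop : Measurable _).aestronglyMeasurable, ?_⟩
  rw [eLpNorm_lt_top_iff_lintegral_rpow_enorm_lt_top (by simpa using hr) ENNReal.ofReal_ne_top,
    ENNReal.toReal_ofReal hr.le]
  convert lintegral_exp_mul_abs_rpow_mudel_lt_top (C := C) hδ hcr using 3 with x
  rw [Real.enorm_of_nonneg (exp_pos _).le, ENNReal.ofReal_rpow_of_nonneg (exp_pos _).le hr.le,
    ← exp_mul]
  ring_nf

lemma memLp_inv_pdel_mul_exp (hδ : 0 < δ) {b r : ℝ} (hr : 0 < r)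
    (hbr : r * (1 - b) < 1) :
    MemLp (fun x => (pdel C δ x)⁻¹ * exp (-(b * |x| ^ δ))) (ENNReal.ofReal r) (mudel C δ) := by
  convert (memLp_exp_mul_abs_rpow_mudel (C := C) hδ hr hbr).const_mul C⁻¹ using 2 with x
  rw [pdel, mul_inv, ← exp_neg, mul_assoc, ← exp_add]
  ring_nf

end mudel

theorem fdel_Lr_bound_general (δ : ℝ) (hδ : δ ∈ Ioo (0 : ℝ) 1) (C : ℝ) (hC : 0 < C)
    (p : ℝ) (hp : 2 ≤ p) (r : ℝ) (hr1 : 1 ≤ r)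
    (hr2 : r = 1 ∨ r / (r - 1) > p / (p - 1)) :
    ∃ K : ℝ, 0 < K ∧ ∀ g : ℝ → ℝ,
      MemLp g (ENNReal.ofReal p) (mudel C δ) → (∫ x, g x ∂(mudel C δ)) = 0 →
      eLpNorm (fdel C δ g) (ENNReal.ofReal r) (mudel C δ) ≤
        ENNReal.ofReal K * eLpNorm g (ENNReal.ofReal p) (mudel C δ) := by
  have hp1 : 1 < p := by linarith
  have hrp : r < p := hr2.elim (fun h => by linarith) (lt_of_div_sub_one_lt_div_sub_one hp1 hr1)
  obtain ⟨a, ha0, ha1, har⟩ := exists_moment_exponent hp1 hr1 hrp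
  set M := ∫⁻ y, ENNReal.ofReal (exp (a * |y| ^ δ)) ∂mudel C δ
  set w := fun x => (pdel C δ x)⁻¹ * exp (-(a * (1 - 1 / p) * |x| ^ δ))
  have hw : MemLp w (ENNReal.ofReal r) (mudel C δ) :=
    memLp_inv_pdel_mul_exp hδ.1 (by linarith) har
  have hM : M < ∞ := lintegral_exp_mul_abs_rpow_mudel_lt_top hδ.1 ha1
  have hMw : M ^ (1 - 1 / p) * eLpNorm w (ENNReal.ofReal r) (mudel C δ) ≠ ∞ :=
    ENNReal.mul_ne_top (ENNReal.rpow_ne_top_of_nonneg (by bound) hM.ne) hw.2.ne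
  refine ⟨(M ^ (1 - 1 / p) * eLpNorm w (ENNReal.ofReal r) (mudel C δ)).toReal + 1, by positivity,
    fun g hg hg0 => ?_⟩
  calc eLpNorm (fdel C δ g) (ENNReal.ofReal r) (mudel C δ)
      ≤ eLpNorm g (ENNReal.ofReal p) (mudel C δ) * M ^ (1 - 1 / p) *
          eLpNorm w (ENNReal.ofReal r) (mudel C δ) := by
        refine eLpNorm_le_mul_eLpNorm_of_ae_le_mul'' _ hw.1 (ae_of_all _ fun x => ?_)
        have h := enorm_fdel_le_mul_exp hC.le hδ.1 (ENNReal.one_le_ofReal.2 hp1.le) hg hg0 ha0 x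
        rwa [ENNReal.toReal_ofReal (by linarith)] at h
    _ ≤ _ := by
        rw [mul_assoc, mul_comm]
        gcongr
        rw [ENNReal.le_ofReal_iff_toReal_le hMw (by positivity)]
        linarith

/-- For `δ ∈ (0,1)`, `p ∈ [2,∞)` and `r ∈ [1,∞)` with `r/(r-1) > p/(p-1)`, there is a
constant `C(p,δ,r)` such that `‖f_δ‖_{L^r(μ_δ)} ≤ C(p,δ,r) ‖g‖_{L^p(μ_δ)}` for every
`g ∈ L^p(μ_δ)` with `∫ g dμ_δ = 0`. -/
theorem fdel_Lr_bound (δ : ℝ) (hδ : δ ∈ Ioo (0 : ℝ) 1) (C : ℝ) (hC : 0 < C)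
    (hprob : IsProbabilityMeasure (mudel C δ))
    (p : ℝ) (hp : 2 ≤ p) (r : ℝ) (hr1 : 1 ≤ r)
    (hr2 : r = 1 ∨ r / (r - 1) > p / (p - 1)) :
    ∃ K : ℝ, 0 < K ∧ ∀ g : ℝ → ℝ,
      MemLp g (ENNReal.ofReal p) (mudel C δ) → (∫ x, g x ∂(mudel C δ)) = 0 →
      eLpNorm (fdel C δ g) (ENNReal.ofReal r) (mudel C δ) ≤
        ENNReal.ofReal K * eLpNorm g (ENNReal.ofReal p) (mudel C δ) :=
  fdel_Lr_bound_general δ hδ C hC p hp r hr1 hr2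
end

section
/- With the notation of the previous statement, the function f_δ is a weak solution of A_δ(f_δ) = g, where A_δ(f)(x) = -f'(x) + δ|x|^{δ-1} sign(x) f(x); that is, for every ψ ∈ C_c^∞(ℝ), ∫_ℝ f_δ(x) ψ'(x) p_δ(x) dx = ∫_ℝ g(x) ψ(x) p_δ(x) dx. -/
open MeasureTheory Real Set
open scoped ENNReal

/-- `f_δ` is a weak solution of `A_δ(f_δ) = g`, where
`A_δ(f)(x) = -f'(x) + δ|x|^{δ-1} sign(x) f(x)`: for every `ψ ∈ C_c^∞(ℝ)`,
`∫ f_δ ψ' p_δ = ∫ g ψ p_δ`. -/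
theorem fdel_weak_solution (δ : ℝ) (hδ : δ ∈ Ioo (0 : ℝ) 1) (C : ℝ) (hC : 0 < C)
    (hprob : IsProbabilityMeasure (mudel C δ))
    (p : ℝ) (hp : 2 ≤ p) (g : ℝ → ℝ)
    (hg : MemLp g (ENNReal.ofReal p) (mudel C δ))
    (hg0 : (∫ x, g x ∂(mudel C δ)) = 0)
    (ψ : ℝ → ℝ) (hψ : ContDiff ℝ (⊤ : ℕ∞) ψ) (hψc : HasCompactSupport ψ) :
    ∫ x, fdel C δ g x * deriv ψ x * pdel C δ x =
      ∫ x, g x * ψ x * pdel C δ x := by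
  obtain ⟨hδ0, hδ1⟩ := hδ
  set G : ℝ → ℝ := fun y => g y * pdel C δ y with hGdef
  have hppos : ∀ x, 0 < pdel C δ x := fun x =>
    mul_pos hC (Real.exp_pos _)
  have hpcont : Continuous fun x => pdel C δ x := by
    unfold pdel
    exact continuous_const.mul ((continuous_abs.rpow_const
      (fun x => Or.inr hδ0.le)).neg.rexp)
  have hpmeas : Measurable fun x => ENNReal.ofReal (pdel C δ x) :=
    (ENNReal.measurable_ofReal.comp hpcont.measurable)
  -- g is integrable w.r.t. μ
  have hg1 : Integrable g (mudel C δ) := by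
    refine memLp_one_iff_integrable.mp (hg.mono_exponent ?_)
    rw [ENNReal.one_le_ofReal]; linarith
  -- hence G is integrable w.r.t. Lebesgue measure
  have hGint : Integrable G := by
    have := (integrable_withDensity_iff hpmeas
      (Filter.Eventually.of_forall fun x => ENNReal.ofReal_lt_top)).mp hg1
    have heq : (fun x => g x * (ENNReal.ofReal (pdel C δ x)).toReal) = G := by
      funext x
      rw [ENNReal.toReal_ofReal (hppos x).le]
    rwa [heq] at this
  have hψ1 : ContDiff ℝ 1 ψ := hψ.of_le (by simp)
  have hψ'cont : Continuous (deriv ψ) := hψ.continuous_deriv (by simp)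
  have hψ'int : Integrable (deriv ψ) :=
    hψ'cont.integrable_of_hasCompactSupport hψc.deriv
  -- the kernel
  set K : ℝ → ℝ → ℝ := fun x y => deriv ψ x * (Ioi x).indicator G y with hKdef
  have hKint : Integrable (Function.uncurry K) (volume.prod volume) := by
    have h1 : Integrable (fun q : ℝ × ℝ => deriv ψ q.1 * G q.2)
        (volume.prod volume) := hψ'int.mul_prod hGint
    have h2 : Function.uncurry K =
        {q : ℝ × ℝ | q.1 < q.2}.indicator (fun q => deriv ψ q.1 * G q.2) := by
      funext q
      simp only [Function.uncurry, hKdef, indicator, mem_Ioi, mem_setOf_eq]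
      split <;> simp
    rw [h2]
    exact h1.indicator (measurableSet_lt measurable_fst measurable_snd)
  -- LHS rewrite
  have hL : ∫ x, fdel C δ g x * deriv ψ x * pdel C δ x
      = ∫ x, ∫ y, K x y := by
    refine integral_congr_ae (Filter.Eventually.of_forall fun x => ?_)
    show fdel C δ g x * deriv ψ x * pdel C δ x = ∫ y, K x y
    rw [show ∫ y, K x y = deriv ψ x * ∫ y in Ioi x, G y by
      rw [integral_const_mul, integral_indicator measurableSet_Ioi]]
    unfold fdel
    field_simp [(hppos x).ne']
    ring
  -- Fubini
  have hswap : ∫ x, ∫ y, K x y = ∫ y, ∫ x, K x y := by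
    exact integral_integral_swap hKint
  -- inner integral computation
  have hR : ∫ y, ∫ x, K x y = ∫ y, g y * ψ y * pdel C δ y := by
    refine integral_congr_ae (Filter.Eventually.of_forall fun y => ?_)
    have h1 : (fun x => K x y) =
        (Iio y).indicator (fun x => deriv ψ x * G y) := by
      funext x
      simp only [hKdef, indicator, mem_Ioi, mem_Iio]
      split <;> simp_all
    show ∫ x, K x y = g y * ψ y * pdel C δ y
    rw [h1, integral_indicator measurableSet_Iio,
      ← integral_Iic_eq_integral_Iio, integral_mul_const,
      hψc.integral_Iic_deriv_eq hψ1 y]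
    simp only [hGdef]; ring
  rw [hL, hswap, hR]
end

section
/- Let μ(dx) = e^{-x} 1_{(0,∞)}(x) dx be the standard exponential probability measure and ν(du) = (e^{-u}/u) 1_{(0,∞)}(u) du its associated Lévy measure. Then for every Schwartz function f : ℝ → ℝ, ∫_0^∞ ∫_0^∞ |f(x+u) - f(x)|² ν(du) μ(dx) ≤ ∫_0^∞ w |f'(w)|² μ(dw). -/
open MeasureTheory Real Set

/-- The standard exponential probability measure on `(0,∞)`. -/
noncomputable def expMeasure : Measure ℝ :=
  (volume.restrict (Ioi (0 : ℝ))).withDensity fun x => ENNReal.ofReal (Real.exp (-x))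

/-- The Lévy measure of the standard exponential distribution, with density `e^{-u}/u`
on `(0,∞)`. -/
noncomputable def expLevyMeasure : Measure ℝ :=
  (volume.restrict (Ioi (0 : ℝ))).withDensity fun u => ENNReal.ofReal (Real.exp (-u) / u)

/-!
For `u > 0` the fundamental theorem of calculus and Cauchy–Schwarz give
`(f (x + u) - f x)² ≤ u ∫_x^{x+u} f'²`, and the factor `u` cancels the `1/u` of the Lévy density.
Exchanging the order of integration (Tonelli) and using `∫_s^∞ e^{-u} du = e^{-s}` bounds the
inner integral by `E |f'(x + S)|²` with `S ~ μ`. Integrating in `x ~ μ` gives `E |f'(X + S)|²`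
for independent `X, S ~ μ`, and `X + S` has density `t e^{-t}` on `(0, ∞)`.
-/

open scoped ENNReal
open Function (uncurry)

theorem ENNReal.lintegral_sq_le_measure_univ_mul {α : Type*} [MeasurableSpace α] (μ : Measure α)
    {g : α → ℝ≥0∞} (hg : AEMeasurable g μ) :
    (∫⁻ a, g a ∂μ) ^ 2 ≤ μ univ * ∫⁻ a, g a ^ 2 ∂μ := by
  have h := ENNReal.lintegral_mul_le_Lp_mul_Lq μ Real.HolderConjugate.two_two
    (aemeasurable_const (b := 1)) hg
  simp only [Pi.mul_apply, one_mul, ENNReal.one_rpow, lintegral_const] at h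
  calc (∫⁻ a, g a ∂μ) ^ 2
      ≤ ((μ univ) ^ (1 / 2 : ℝ) * (∫⁻ a, g a ^ (2 : ℝ) ∂μ) ^ (1 / 2 : ℝ)) ^ 2 := by gcongr
    _ = μ univ * ∫⁻ a, g a ^ 2 ∂μ := by
      rw [mul_pow, ← ENNReal.rpow_natCast, ← ENNReal.rpow_natCast, ← ENNReal.rpow_mul,
        ← ENNReal.rpow_mul]
      norm_num [ENNReal.rpow_two]

theorem setLIntegral_Ioi_setLIntegral_Ioc_swap {F : ℝ → ℝ → ℝ≥0∞} (hF : Measurable (uncurry F))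
    (a : ℝ) :
    ∫⁻ y in Ioi a, ∫⁻ x in Ioc a y, F x y = ∫⁻ x in Ioi a, ∫⁻ y in Ici x, F x y := by
  set T : Set (ℝ × ℝ) := {p | a < p.1 ∧ p.1 ≤ p.2}
  have hT : MeasurableSet T :=
    (measurableSet_lt measurable_const measurable_fst).inter
      (measurableSet_le measurable_fst measurable_snd)
  have hlhs : ∀ y, (Ioi a).indicator (fun y => ∫⁻ x in Ioc a y, F x y) y =
      ∫⁻ x, T.indicator (uncurry F) (x, y) := by
    intro y
    by_cases hy : a < y
    · rw [indicator_of_mem (mem_Ioi.2 hy), ← lintegral_indicator measurableSet_Ioc]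
      simp [T, indicator_apply]
    · have : ∀ x, ¬ (a < x ∧ x ≤ y) := fun x hx => hy (hx.1.trans_le hx.2)
      simp [T, hy, this]
  have hrhs : ∀ x, (Ioi a).indicator (fun x => ∫⁻ y in Ici x, F x y) x =
      ∫⁻ y, T.indicator (uncurry F) (x, y) := by
    intro x
    by_cases hx : a < x
    · rw [indicator_of_mem (mem_Ioi.2 hx), ← lintegral_indicator measurableSet_Ici]
      simp [T, indicator_apply, hx]
    · simp [T, hx]
  rw [← lintegral_indicator measurableSet_Ioi, ← lintegral_indicator measurableSet_Ioi]
  simp_rw [hlhs, hrhs]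
  exact lintegral_lintegral_swap ((hF.indicator hT).comp measurable_swap).aemeasurable

theorem setLIntegral_Ici_ofReal_exp_neg (a : ℝ) :
    ∫⁻ u in Ici a, ENNReal.ofReal (rexp (-u)) = ENNReal.ofReal (rexp (-a)) := by
  rw [← restrict_Ioi_eq_restrict_Ici, ← integral_exp_neg_Ioi a,
    ofReal_integral_eq_lintegral_ofReal]
  · exact (by simpa using exp_neg_integrableOn_Ioi a one_pos : IntegrableOn _ _ _)
  · exact Filter.Eventually.of_forall fun x => (exp_pos _).le

instance : SFinite expMeasure := by
  unfold expMeasure; infer_instance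

theorem lintegral_expMeasure {g : ℝ → ℝ≥0∞} (hg : Measurable g) :
    ∫⁻ x, g x ∂expMeasure = ∫⁻ x in Ioi 0, ENNReal.ofReal (rexp (-x)) * g x :=
  lintegral_withDensity_eq_lintegral_mul _ (by fun_prop) hg

theorem lintegral_expLevyMeasure {g : ℝ → ℝ≥0∞} (hg : Measurable g) :
    ∫⁻ u, g u ∂expLevyMeasure = ∫⁻ u in Ioi 0, ENNReal.ofReal (rexp (-u) / u) * g u :=
  lintegral_withDensity_eq_lintegral_mul _ (by fun_prop) hg

theorem ae_expMeasure_pos : ∀ᵐ x ∂expMeasure, 0 < x :=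
  (withDensity_absolutelyContinuous _ _).ae_le (ae_restrict_mem measurableSet_Ioi)

theorem lintegral_ofReal_mul_expMeasure_lt_top {g : ℝ → ℝ≥0∞} {C : ℝ≥0∞} (hC : C ≠ ⊤)
    (hg : ∀ x, g x ≤ C) : ∫⁻ x, ENNReal.ofReal x * g x ∂expMeasure < ⊤ := by
  have hΓ := GammaIntegral_convergent (s := 2) two_pos
  norm_num at hΓ
  calc ∫⁻ x, ENNReal.ofReal x * g x ∂expMeasure
      ≤ (∫⁻ x, ENNReal.ofReal x ∂expMeasure) * C := by
        rw [← lintegral_mul_const _ ENNReal.measurable_ofReal]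
        exact lintegral_mono fun x => by gcongr; exact hg x
    _ = (∫⁻ x in Ioi 0, ENNReal.ofReal (rexp (-x) * x)) * C := by
        simp_rw [lintegral_expMeasure ENNReal.measurable_ofReal,
          ENNReal.ofReal_mul (exp_pos _).le]
    _ < ⊤ := ENNReal.mul_lt_top hΓ.setLIntegral_lt_top hC.lt_top

theorem lintegral_expMeasure_lintegral_expMeasure_add {g : ℝ → ℝ≥0∞} (hg : Measurable g) :
    ∫⁻ x, ∫⁻ s, g (x + s) ∂expMeasure ∂expMeasure =
      ∫⁻ t, ENNReal.ofReal t * g t ∂expMeasure := by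
  set φ : ℝ → ℝ≥0∞ := fun t => ENNReal.ofReal (rexp (-t)) * g t
  have hφ : Measurable φ := by fun_prop
  have hinner : ∀ x, ENNReal.ofReal (rexp (-x)) * ∫⁻ s, g (x + s) ∂expMeasure =
      ∫⁻ t in Ici x, φ t := by
    intro x
    rw [lintegral_expMeasure (by fun_prop), ← lintegral_const_mul _ (by fun_prop),
      ← restrict_Ioi_eq_restrict_Ici]
    calc ∫⁻ s in Ioi 0, ENNReal.ofReal (rexp (-x)) * (ENNReal.ofReal (rexp (-s)) * g (x + s))
        = ∫⁻ s in (x + ·) ⁻¹' Ioi x, φ (x + s) := by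
          simp only [preimage_const_add_Ioi, sub_self, φ, ← mul_assoc,
            ← ENNReal.ofReal_mul (exp_pos _).le, ← exp_add, neg_add]
      _ = ∫⁻ t in Ioi x, φ t :=
          (measurePreserving_add_left volume x).setLIntegral_comp_preimage_emb
            (measurableEmbedding_addLeft x) _ _
  have hmeas : Measurable fun x => ∫⁻ s, g (x + s) ∂expMeasure :=
    (hg.comp measurable_add).lintegral_prod_right'
  rw [lintegral_expMeasure hmeas, lintegral_expMeasure (by fun_prop)]
  calc ∫⁻ x in Ioi 0, ENNReal.ofReal (rexp (-x)) * ∫⁻ s, g (x + s) ∂expMeasure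
      = ∫⁻ x in Ioi 0, ∫⁻ t in Ici x, φ t := by simp_rw [hinner]
    _ = ∫⁻ t in Ioi 0, ∫⁻ x in Ioc 0 t, φ t :=
        (setLIntegral_Ioi_setLIntegral_Ioc_swap (F := fun _ t => φ t) (by fun_prop) 0).symm
    _ = ∫⁻ t in Ioi 0, ENNReal.ofReal (rexp (-t)) * (ENNReal.ofReal t * g t) := by
        simp only [setLIntegral_const, Real.volume_Ioc, sub_zero, φ]
        congr! 2 with t; ring

section Deriv

variable {E : Type*} [NormedAddCommGroup E] [NormedSpace ℝ E] [CompleteSpace E]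

theorem enorm_sub_sq_le_mul_setLIntegral_deriv {f : ℝ → E} (hf : ContDiff ℝ 1 f) {x y : ℝ}
    (hxy : x ≤ y) :
    ‖f y - f x‖ₑ ^ 2 ≤ ENNReal.ofReal (y - x) * ∫⁻ t in Ioc x y, ‖deriv f t‖ₑ ^ 2 := by
  have hD := hf.continuous_deriv le_rfl
  have hftc : f y - f x = ∫ t in Ioc x y, deriv f t := by
    rw [← intervalIntegral.integral_of_le hxy, intervalIntegral.integral_deriv_eq_sub
      (fun t _ => hf.differentiable one_ne_zero t) (hD.intervalIntegrable _ _)]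
  calc ‖f y - f x‖ₑ ^ 2 ≤ (∫⁻ t in Ioc x y, ‖deriv f t‖ₑ) ^ 2 := by
        rw [hftc]; gcongr; exact enorm_integral_le_lintegral_enorm _
    _ ≤ _ := ENNReal.lintegral_sq_le_measure_univ_mul _ hD.enorm.aemeasurable
    _ = _ := by rw [Measure.restrict_apply_univ, Real.volume_Ioc]

theorem lintegral_expLevyMeasure_enorm_sub_sq_le {f : ℝ → E} (hf : ContDiff ℝ 1 f) (x : ℝ) :
    ∫⁻ u, ‖f (x + u) - f x‖ₑ ^ 2 ∂expLevyMeasure ≤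
      ∫⁻ s, ‖deriv f (x + s)‖ₑ ^ 2 ∂expMeasure := by
  have hD := hf.continuous_deriv le_rfl
  have hfc := hf.continuous
  have hfx : ContDiff ℝ 1 fun s => f (x + s) := hf.comp (contDiff_const.add contDiff_id)
  set h : ℝ → ℝ≥0∞ := fun s => ‖deriv f (x + s)‖ₑ ^ 2
  have hh : Measurable h := by fun_prop
  have hG : Continuous fun u => ‖f (x + u) - f x‖ₑ ^ 2 := by fun_prop
  rw [lintegral_expLevyMeasure hG.measurable, lintegral_expMeasure hh]
  calc ∫⁻ u in Ioi 0, ENNReal.ofReal (rexp (-u) / u) * ‖f (x + u) - f x‖ₑ ^ 2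
      ≤ ∫⁻ u in Ioi 0, ∫⁻ s in Ioc 0 u, ENNReal.ofReal (rexp (-u)) * h s := by
        refine setLIntegral_mono' measurableSet_Ioi fun u (hu : 0 < u) => ?_
        have hCS := enorm_sub_sq_le_mul_setLIntegral_deriv hfx hu.le
        simp only [add_zero, sub_zero, deriv_comp_const_add] at hCS
        rw [lintegral_const_mul _ hh]
        calc ENNReal.ofReal (rexp (-u) / u) * ‖f (x + u) - f x‖ₑ ^ 2
            ≤ ENNReal.ofReal (rexp (-u) / u) * (ENNReal.ofReal u * ∫⁻ s in Ioc 0 u, h s) := by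
              gcongr
          _ = ENNReal.ofReal (rexp (-u)) * ∫⁻ s in Ioc 0 u, h s := by
              rw [← mul_assoc, ← ENNReal.ofReal_mul (by positivity), div_mul_cancel₀ _ hu.ne']
    _ = ∫⁻ s in Ioi 0, ∫⁻ u in Ici s, ENNReal.ofReal (rexp (-u)) * h s :=
        setLIntegral_Ioi_setLIntegral_Ioc_swap (by fun_prop) 0
    _ = ∫⁻ s in Ioi 0, ENNReal.ofReal (rexp (-s)) * h s := by
        simp_rw [lintegral_mul_const _ (by fun_prop : Measurable fun u : ℝ =>
          ENNReal.ofReal (rexp (-u))), setLIntegral_Ici_ofReal_exp_neg]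

end Deriv

/-- The non-local exponential energy form is dominated by the weighted local one:
`∫∫ |f(x+u)-f(x)|² ν(du) μ(dx) ≤ ∫ w |f'(w)|² μ(dw)`. -/
theorem exp_nonlocal_le_weighted_local (f : SchwartzMap ℝ ℝ) :
    (∫ x, (∫ u, (f (x + u) - f x) ^ 2 ∂expLevyMeasure) ∂expMeasure) ≤
      ∫ w, w * (deriv (fun y => f y) w) ^ 2 ∂expMeasure := by
  have hf : ContDiff ℝ 1 f := f.smooth 1
  have hD := hf.continuous_deriv le_rfl
  set R := ∫⁻ w, ENNReal.ofReal w * ‖deriv f w‖ₑ ^ 2 ∂expMeasure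
  have hR : R ≠ ⊤ := by
    set c := SchwartzMap.seminorm ℝ 0 0 (SchwartzMap.derivCLM ℝ ℝ f)
    refine (lintegral_ofReal_mul_expMeasure_lt_top (C := ENNReal.ofReal c ^ 2) (by finiteness)
      fun w => ?_).ne
    rw [← ofReal_norm, ← SchwartzMap.derivCLM_apply ℝ]
    gcongr
    exact SchwartzMap.norm_le_seminorm ℝ _ w
  have hRHS : ∫ w, w * deriv f w ^ 2 ∂expMeasure = R.toReal := by
    rw [integral_eq_lintegral_of_nonneg_ae
      (ae_expMeasure_pos.mono fun w hw => by positivity) (by fun_prop)]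
    congr 1
    refine lintegral_congr fun w => ?_
    rw [ENNReal.ofReal_mul' (sq_nonneg _), ← enorm_pow, Real.enorm_eq_ofReal (sq_nonneg _)]
  have hLHS :
      ENNReal.ofReal (∫ x, (∫ u, (f (x + u) - f x) ^ 2 ∂expLevyMeasure) ∂expMeasure) ≤ R :=
    calc _ ≤ ∫⁻ x, ‖∫ u, (f (x + u) - f x) ^ 2 ∂expLevyMeasure‖ₑ ∂expMeasure :=
          (Real.ofReal_le_enorm _).trans (enorm_integral_le_lintegral_enorm _)
      _ ≤ ∫⁻ x, ∫⁻ u, ‖f (x + u) - f x‖ₑ ^ 2 ∂expLevyMeasure ∂expMeasure :=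
          lintegral_mono fun x => (enorm_integral_le_lintegral_enorm _).trans_eq (by simp)
      _ ≤ ∫⁻ x, ∫⁻ s, ‖deriv f (x + s)‖ₑ ^ 2 ∂expMeasure ∂expMeasure :=
          lintegral_mono fun x => lintegral_expLevyMeasure_enorm_sub_sq_le hf x
      _ = R := lintegral_expMeasure_lintegral_expMeasure_add
          (g := fun t => ‖deriv f t‖ₑ ^ 2) (by fun_prop)
  rw [hRHS]
  exact (ENNReal.ofReal_le_iff_le_toReal hR).1 hLHS
end
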